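/- arXiv:1403.5804 — 5 statements merged into one kernel-verified Lean document; each statement's English description precedes it below -/
import Mathlib

section
/- If P_{Σ,a,q} is defined by (P_{Σ,a,q} x̂)_i = x̂_{Σ^T(i−a)} ω^{i^T Σ q}, where ω = e^{2πi/n} and Σ is invertible mod n, then the inverse d-dimensional DFT of P_{Σ,a,q} x̂ evaluated at π_{Σ,q}(i) := Σ(i−q) mod n equals x_i ω^{a^T Σ i}. -/
open Finset Matrix

/-- Lemma 2.2 of the paper: `F⁻¹(P_{Σ,a,q} x̂)_{π_{Σ,q}(i)} = x_i ω^{aᵀΣi}`. -/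
theorem stmt_1 (n d : ℕ) [NeZero n] (hn : ∃ k, n = 2 ^ k)
    (x : (Fin d → ZMod n) → ℂ)
    (A : Matrix (Fin d) (Fin d) (ZMod n)) (hA : Odd A.det.val)
    (a q i0 : Fin d → ZMod n)
    (ch : ZMod n → ℂ)
    (hch : ∀ t : ZMod n, ch t = Complex.exp (2 * Real.pi * Complex.I * (t.val : ℂ) / (n : ℂ)))
    (hatx P invP : (Fin d → ZMod n) → ℂ)
    (hhatx : ∀ j, hatx j = ((Real.sqrt ((n : ℝ) ^ d) : ℂ))⁻¹ *
        ∑ i : Fin d → ZMod n, ch (-(∑ s, i s * j s)) * x i)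
    (hP : ∀ i, P i = hatx (A.transpose.mulVec (i - a)) * ch (∑ s, i s * (A.mulVec q) s))
    (hinv : ∀ j, invP j = ((Real.sqrt ((n : ℝ) ^ d) : ℂ))⁻¹ *
        ∑ i : Fin d → ZMod n, ch (∑ s, i s * j s) * P i) :
    invP (A.mulVec (i0 - q)) = x i0 * ch (∑ s, a s * (A.mulVec i0) s) := by
  classical
  obtain ⟨k, hk⟩ := hn
  set ψ := ZMod.stdAddChar (N := n) with hψdef
  have hch' : ∀ t, ch t = ψ t := by
    intro t
    rw [hch, hψdef, ZMod.stdAddChar_apply, ZMod.toCircle_apply]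
  set c : ℂ := ((Real.sqrt ((n : ℝ) ^ d) : ℂ))⁻¹ with hc
  -- determinant is a unit
  have hdet : IsUnit A.det := by
    rw [← ZMod.natCast_zmod_val A.det]
    rw [ZMod.isUnit_iff_coprime]
    have h2 : Nat.Coprime A.det.val (2 ^ k) := Nat.Coprime.pow_right k hA.coprime_two_right
    rwa [← hk] at h2
  have := A.invertibleOfIsUnitDet hdet
  have hinj : ∀ v : Fin d → ZMod n, A.mulVec v = 0 → v = 0 := by
    intro v hv
    have h2 : (⅟A * A).mulVec v = (⅟A).mulVec 0 := by
      rw [← Matrix.mulVec_mulVec, hv]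
    rwa [invOf_mul_self, Matrix.one_mulVec, Matrix.mulVec_zero] at h2
  -- ψ of a finite sum is a product
  have hpsum : ∀ (S : Finset (Fin d)) (f : Fin d → ZMod n),
      ψ (∑ s ∈ S, f s) = ∏ s ∈ S, ψ (f s) := by
    intro S f
    induction S using Finset.cons_induction with
    | empty => simp
    | cons b s hb ih => rw [Finset.sum_cons, Finset.prod_cons, ψ.map_add_eq_mul, ih]
  -- orthogonality
  have horth : ∀ v : Fin d → ZMod n,
      (∑ i : Fin d → ZMod n, ψ (i ⬝ᵥ v)) = if v = 0 then ((n : ℂ) ^ d) else 0 := by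
    intro v
    have hfact : (∑ i : Fin d → ZMod n, ψ (i ⬝ᵥ v)) = ∏ s, ∑ t : ZMod n, ψ (t * v s) := by
      rw [Fintype.prod_sum (f := fun (s : Fin d) (t : ZMod n) => ψ (t * v s))]
      exact Finset.sum_congr rfl fun i _ => hpsum Finset.univ fun s => i s * v s
    rw [hfact]
    by_cases hv : v = 0
    · subst hv
      simp [ZMod.card]
    · obtain ⟨s0, hs0⟩ : ∃ s0, v s0 ≠ 0 := by
        by_contra h
        push_neg at h
        exact hv (funext h)
      rw [if_neg hv]
      refine Finset.prod_eq_zero (Finset.mem_univ s0) ?_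
      rw [AddChar.sum_mulShift _ (ZMod.isPrimitive_stdAddChar n), if_neg hs0]
      norm_num
  -- hypotheses in dot-product form
  have hhatx' : ∀ j, hatx j = c * ∑ m : Fin d → ZMod n, ψ (-(m ⬝ᵥ j)) * x m := by
    intro j
    rw [hhatx j]
    exact congrArg _ (Finset.sum_congr rfl fun m _ => by rw [hch']; rfl)
  have hP' : ∀ i, P i = hatx (Aᵀ *ᵥ (i - a)) * ψ (i ⬝ᵥ (A *ᵥ q)) := by
    intro i
    rw [hP i, hch']
    rfl
  have hinv' : ∀ j, invP j = c * ∑ i : Fin d → ZMod n, ψ (i ⬝ᵥ j) * P i := by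
    intro j
    rw [hinv j]
    exact congrArg _ (Finset.sum_congr rfl fun m _ => by rw [hch']; rfl)
  -- key phase identity
  have keyψ : ∀ i m : Fin d → ZMod n,
      ψ (i ⬝ᵥ (A *ᵥ (i0 - q))) * (ψ (-(m ⬝ᵥ (Aᵀ *ᵥ (i - a)))) * ψ (i ⬝ᵥ (A *ᵥ q)))
        = ψ (i ⬝ᵥ (A *ᵥ (i0 - m))) * ψ (a ⬝ᵥ (A *ᵥ m)) := by
    intro i m
    rw [← ψ.map_add_eq_mul, ← ψ.map_add_eq_mul, ← ψ.map_add_eq_mul]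
    congr 1
    have h1 : m ⬝ᵥ (Aᵀ *ᵥ (i - a)) = (i ᵥ* A) ⬝ᵥ m - (a ᵥ* A) ⬝ᵥ m := by
      rw [Matrix.mulVec_transpose, dotProduct_comm, Matrix.sub_vecMul,
        sub_dotProduct]
    rw [h1]
    simp only [Matrix.dotProduct_mulVec, dotProduct_sub]
    ring
  -- main computation
  rw [hinv']
  have hmain : ∀ i : Fin d → ZMod n, ψ (i ⬝ᵥ (A *ᵥ (i0 - q))) * P i
      = ∑ m : Fin d → ZMod n,
          c * (ψ (i ⬝ᵥ (A *ᵥ (i0 - m))) * (ψ (a ⬝ᵥ (A *ᵥ m)) * x m)) := by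
    intro i
    rw [hP' i, hhatx', Finset.mul_sum, Finset.sum_mul, Finset.mul_sum]
    refine Finset.sum_congr rfl fun m _ => ?_
    calc ψ (i ⬝ᵥ (A *ᵥ (i0 - q))) * (c * (ψ (-(m ⬝ᵥ (Aᵀ *ᵥ (i - a)))) * x m) * ψ (i ⬝ᵥ (A *ᵥ q)))
        = c * (ψ (i ⬝ᵥ (A *ᵥ (i0 - q))) * (ψ (-(m ⬝ᵥ (Aᵀ *ᵥ (i - a)))) * ψ (i ⬝ᵥ (A *ᵥ q))) * x m) := by
          ring
      _ = c * (ψ (i ⬝ᵥ (A *ᵥ (i0 - m))) * ψ (a ⬝ᵥ (A *ᵥ m)) * x m) := by rw [keyψ i m]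
      _ = c * (ψ (i ⬝ᵥ (A *ᵥ (i0 - m))) * (ψ (a ⬝ᵥ (A *ᵥ m)) * x m)) := by ring
  rw [Finset.sum_congr rfl fun i _ => hmain i, Finset.sum_comm]
  have hstep : ∀ m : Fin d → ZMod n,
      (∑ i : Fin d → ZMod n, c * (ψ (i ⬝ᵥ (A *ᵥ (i0 - m))) * (ψ (a ⬝ᵥ (A *ᵥ m)) * x m)))
        = if m = i0 then (n : ℂ) ^ d * c * (ψ (a ⬝ᵥ (A *ᵥ i0)) * x i0) else 0 := by
    intro m
    rw [← Finset.mul_sum, ← Finset.sum_mul, horth]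
    have hiff : (A *ᵥ (i0 - m) = 0) ↔ (m = i0) := by
      constructor
      · intro h
        have := hinj _ h
        rw [sub_eq_zero] at this
        exact this.symm
      · rintro rfl
        rw [sub_self, Matrix.mulVec_zero]
    by_cases hm : m = i0
    · rw [if_pos (hiff.mpr hm), if_pos hm, hm]
      ring
    · rw [if_neg (fun h => hm (hiff.mp h)), if_neg hm]
      ring
  rw [Finset.sum_congr rfl fun m _ => hstep m, Finset.sum_ite_eq' Finset.univ i0]
  rw [if_pos (Finset.mem_univ i0)]
  -- normalization constant
  have hsq : ((Real.sqrt ((n : ℝ) ^ d) : ℂ)) * ((Real.sqrt ((n : ℝ) ^ d) : ℂ)) = (n : ℂ) ^ d := by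
    rw [← Complex.ofReal_mul, Real.mul_self_sqrt (by positivity)]
    push_cast
    ring
  have hne : ((Real.sqrt ((n : ℝ) ^ d) : ℂ)) ≠ 0 := by
    intro h
    rw [h, mul_zero] at hsq
    exact (pow_ne_zero d (Nat.cast_ne_zero.mpr (NeZero.ne n))) hsq.symm
  have hcc : c * ((n : ℂ) ^ d * c) = 1 := by
    rw [hc, ← hsq]
    field_simp
  calc c * ((n : ℂ) ^ d * c * (ψ (a ⬝ᵥ (A *ᵥ i0)) * x i0))
      = (c * ((n : ℂ) ^ d * c)) * (ψ (a ⬝ᵥ (A *ᵥ i0)) * x i0) := by ring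
    _ = ψ (a ⬝ᵥ (A *ᵥ i0)) * x i0 := by rw [hcc, one_mul]
    _ = x i0 * ch (∑ s, a s * (A.mulVec i0) s) := by rw [hch']; exact mul_comm _ _
end

section
/- For all j ∈ [n] with |j| ≤ n/(2b), the filter value H^F_j = (sin(π(b−1)j/n)/((b−1)sin(πj/n)))^F satisfies H^F_j ≥ (2π)^{−F}, and H^F_0 = 1. -/
lemma abs_sin_eq' (x : ℝ) (h : |x| ≤ Real.pi) : |Real.sin x| = Real.sin |x| := by
  rcases le_or_gt 0 x with hx | hx
  · rw [abs_of_nonneg hx] at h ⊢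
    rw [abs_of_nonneg (Real.sin_nonneg_of_nonneg_of_le_pi hx h)]
  · rw [abs_of_neg hx] at h ⊢
    rw [show Real.sin (-x) = -Real.sin x from Real.sin_neg x, ← abs_neg, ← Real.sin_neg,
      abs_of_nonneg (Real.sin_nonneg_of_nonneg_of_le_pi (by linarith) h)]

theorem stmt_3 (n b F : ℕ) (hn : ∃ k, n = 2 ^ k) (hb : 3 ≤ b) (hF : 1 ≤ F) (hFe : Even F)
    (H : ℤ → ℝ) (hH0 : H 0 = 1)
    (hH : ∀ j : ℤ, j ≠ 0 → H j = (Real.sin (Real.pi * ((b : ℝ) - 1) * j / n) /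
        (((b : ℝ) - 1) * Real.sin (Real.pi * j / n))) ^ F) :
    H 0 = 1 ∧ ∀ j : ℤ, 2 * (b : ℝ) * |(j : ℝ)| ≤ n → ((2 * Real.pi)⁻¹) ^ F ≤ H j := by
  have hπ := Real.pi_pos
  refine ⟨hH0, ?_⟩
  intro j hj
  rcases eq_or_ne j 0 with rfl | hj0
  · rw [hH0]
    calc ((2 * Real.pi)⁻¹) ^ F ≤ 1 ^ F := by
          apply pow_le_pow_left₀ (by positivity)
          rw [inv_le_one_iff₀]
          right; nlinarith [Real.pi_gt_three]
      _ = 1 := one_pow F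
  · rw [hH j hj0]
    set s : ℝ := |(j : ℝ)| with hsdef
    have hs1 : (1 : ℝ) ≤ s := by
      rw [hsdef, ← Int.cast_abs]
      exact_mod_cast Int.one_le_abs hj0
    have hb' : (3 : ℝ) ≤ (b : ℝ) := by exact_mod_cast hb
    have hc : (2 : ℝ) ≤ (b : ℝ) - 1 := by linarith
    have hm : (6 : ℝ) ≤ (n : ℝ) := by nlinarith
    have hmpos : (0 : ℝ) < n := by linarith
    -- argument bounds
    have hx1 : Real.pi * ((b : ℝ) - 1) * s / n ≤ Real.pi / 2 := by
      rw [div_le_iff₀ hmpos]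
      nlinarith
    have hx1' : 0 ≤ Real.pi * ((b : ℝ) - 1) * s / n := by positivity
    have hx2pos : 0 < Real.pi * s / n := by positivity
    have hx2 : Real.pi * s / n ≤ Real.pi / 2 := by
      rw [div_le_iff₀ hmpos]
      nlinarith [mul_le_mul_of_nonneg_left hj hπ.le,
        mul_nonneg (mul_nonneg hπ.le (by linarith : (0:ℝ) ≤ (b:ℝ) - 3)) (by linarith : (0:ℝ) ≤ s)]
    have hlow := Real.mul_le_sin hx1' hx1
    have hup := Real.sin_le hx2pos.le
    have hpos : 0 < Real.sin (Real.pi * s / n) :=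
      Real.sin_pos_of_pos_of_lt_pi hx2pos (by linarith)
    have habsA : |Real.pi * ((b : ℝ) - 1) * (j : ℝ) / n| = Real.pi * ((b : ℝ) - 1) * s / n := by
      rw [abs_div, abs_mul, abs_mul, abs_of_nonneg hπ.le, abs_of_nonneg (by linarith : (0:ℝ) ≤ (b:ℝ) - 1), abs_of_nonneg hmpos.le]
    have habsB : |Real.pi * (j : ℝ) / n| = Real.pi * s / n := by
      rw [abs_div, abs_mul, abs_of_nonneg hπ.le, abs_of_nonneg hmpos.le]
    have hA : |Real.sin (Real.pi * ((b : ℝ) - 1) * (j : ℝ) / n)| =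
        Real.sin (Real.pi * ((b : ℝ) - 1) * s / n) := by
      rw [abs_sin_eq' _ (by rw [habsA]; linarith), habsA]
    have hB : |Real.sin (Real.pi * (j : ℝ) / n)| = Real.sin (Real.pi * s / n) := by
      rw [abs_sin_eq' _ (by rw [habsB]; linarith), habsB]
    conv_rhs => rw [← Even.pow_abs hFe]
    apply pow_le_pow_left₀ (by positivity)
    rw [abs_div, abs_mul, hA, hB, abs_of_nonneg (by linarith : (0:ℝ) ≤ (b:ℝ) - 1)]
    rw [le_div_iff₀ (by positivity)]
    have e1 : 2 / Real.pi * (Real.pi * ((b : ℝ) - 1) * s / n) = 2 * ((b : ℝ) - 1) * s / n := by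
      field_simp
    rw [e1] at hlow
    have e2 : (2 * Real.pi)⁻¹ * (((b : ℝ) - 1) * Real.sin (Real.pi * s / n)) ≤
        (2 * Real.pi)⁻¹ * (((b : ℝ) - 1) * (Real.pi * s / n)) := by
      apply mul_le_mul_of_nonneg_left _ (by positivity)
      apply mul_le_mul_of_nonneg_left hup (by linarith)
    have e3 : (2 * Real.pi)⁻¹ * (((b : ℝ) - 1) * (Real.pi * s / n)) = ((b : ℝ) - 1) * s / (2 * n) := by
      field_simp
    rw [e3] at e2
    have e4 : ((b : ℝ) - 1) * s / (2 * n) ≤ 2 * ((b : ℝ) - 1) * s / n := by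
      rw [div_le_div_iff₀ (by positivity) hmpos]
      nlinarith [mul_nonneg (mul_nonneg (by linarith : (0:ℝ) ≤ (b:ℝ) - 1) (by linarith : (0:ℝ) ≤ s)) hmpos.le]
    linarith
end

section
/- The d-dimensional tensor filter G_j = Π_{s=1}^d H^F_{j_s} satisfies |G_j| ≤ (2/(1 + (b/n)·||j||_∞))^F for all j ∈ [n]^d, provided b ≥ 3. -/
/-!
Put `x = π m / n` and `q = b - 1`. Since `|sin (q x)| ≤ q |sin x|`, each one-dimensional factor
has absolute value at most `1`; by Jordan's inequality `|sin x| ≥ 2 |x| / π` it is also at most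
`n / (2 q |m|)`, and the smaller of these two bounds is below `2 / (1 + b |m| / n)`. As every factor
of the product is bounded by `1`, the product is bounded by its factor at a coordinate where
`‖j‖_∞` is attained.
-/

open Real Finset

lemma abs_sin_nat_mul_le (q : ℕ) (x : ℝ) : |sin (q * x)| ≤ q * |sin x| := by
  induction q with
  | zero => simp
  | succ k ih =>
    calc |sin (((k + 1 : ℕ) : ℝ) * x)| = |sin (k * x) * cos x + cos (k * x) * sin x| := by
          push_cast; rw [add_mul, one_mul, sin_add]
      _ ≤ |sin (k * x)| * |cos x| + |cos (k * x)| * |sin x| := by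
          rw [← abs_mul, ← abs_mul]; exact abs_add_le _ _
      _ ≤ k * |sin x| * 1 + 1 * |sin x| := by
          gcongr
          exacts [abs_cos_le_one x, abs_cos_le_one _]
      _ = ((k + 1 : ℕ) : ℝ) * |sin x| := by push_cast; ring

lemma abs_sin_nat_mul_div_le_one (q : ℕ) (x : ℝ) : |sin (q * x) / (q * sin x)| ≤ 1 := by
  rw [abs_div]
  exact div_le_one_of_le₀ (by simpa [abs_mul] using abs_sin_nat_mul_le q x) (abs_nonneg _)

lemma abs_sin_nat_mul_div_le (q : ℕ) {x : ℝ} (hx : |x| ≤ π / 2) :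
    |sin (q * x) / (q * sin x)| ≤ π / (2 * q * |x|) := by
  rcases eq_or_ne ((q : ℝ) * |x|) 0 with h | h
  · rcases mul_eq_zero.1 h with h | h <;> simp_all
  have hx0 : 0 < |x| := lt_of_le_of_ne (abs_nonneg x) (right_ne_zero_of_mul h).symm
  have hq : 0 < (q : ℝ) := lt_of_le_of_ne (Nat.cast_nonneg q) (left_ne_zero_of_mul h).symm
  calc |sin (q * x) / (q * sin x)| = |sin (q * x)| / (q * |sin x|) := by
        rw [abs_div, abs_mul, Nat.abs_cast]
    _ ≤ 1 / (q * (2 / π * |x|)) := by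
        have : 0 < 2 / π * |x| := by positivity
        gcongr
        exacts [abs_sin_le_one _, mul_abs_le_abs_sin hx]
    _ = π / (2 * q * |x|) := by field_simp

lemma abs_sin_nat_mul_div_le_two_div {q : ℕ} (hq : 1 ≤ q) {x : ℝ} (hx : |x| ≤ π / 2) :
    |sin (q * x) / (q * sin x)| ≤ 2 / (1 + (q + 1) * |x| / π) := by
  have hq' : (1 : ℝ) ≤ q := by exact_mod_cast hq
  by_cases hsmall : (q + 1) * |x| ≤ π
  · refine (abs_sin_nat_mul_div_le_one q x).trans ?_
    rw [le_div_iff₀ (by positivity)]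
    linarith [div_le_one_of_le₀ hsmall pi_pos.le]
  · refine (abs_sin_nat_mul_div_le q hx).trans ?_
    have hx0 : 0 < |x| := by
      by_contra! h
      exact hsmall (by nlinarith [abs_nonneg x, pi_pos])
    rw [div_le_div_iff₀ (by positivity) (by positivity), mul_add, mul_one,
      mul_div_cancel₀ _ pi_ne_zero]
    nlinarith

lemma abs_prod_le_abs_of_abs_le_one {ι R : Type*} [Fintype ι] [CommRing R] [LinearOrder R]
    [IsStrictOrderedRing R] {f : ι → R} (h : ∀ i, |f i| ≤ 1) (t : ι) :
    |∏ i, f i| ≤ |f t| := by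
  classical
  rw [abs_prod, ← mul_prod_erase _ _ (mem_univ t)]
  exact mul_le_of_le_one_right (abs_nonneg _)
    (prod_le_one (fun i _ => abs_nonneg _) fun i _ => h i)

noncomputable def dirichletRatio (b : ℕ) (n m : ℝ) : ℝ :=
  sin (π * ((b : ℝ) - 1) * m / n) / (((b : ℝ) - 1) * sin (π * m / n))

lemma dirichletRatio_eq {b : ℕ} (hb : 1 ≤ b) (n m : ℝ) :
    dirichletRatio b n m =
      sin ((b - 1 : ℕ) * (π * m / n)) / ((b - 1 : ℕ) * sin (π * m / n)) := by
  rw [dirichletRatio, Nat.cast_sub hb, Nat.cast_one]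
  ring_nf

lemma abs_dirichletRatio_le_one {b : ℕ} (hb : 1 ≤ b) (n m : ℝ) :
    |dirichletRatio b n m| ≤ 1 := by
  rw [dirichletRatio_eq hb]
  exact abs_sin_nat_mul_div_le_one _ _

lemma abs_dirichletRatio_le_two_div {b : ℕ} (hb : 2 ≤ b) {n m : ℝ} (hm : 2 * |m| ≤ n) :
    |dirichletRatio b n m| ≤ 2 / (1 + b / n * |m|) := by
  have hn : 0 ≤ n := le_trans (by positivity) hm
  have hx : |π * m / n| = π * |m| / n := by
    rw [abs_div, abs_mul, abs_of_pos pi_pos, abs_of_nonneg hn]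
  rw [dirichletRatio_eq (by omega)]
  convert abs_sin_nat_mul_div_le_two_div (q := b - 1) (by omega) (x := π * m / n) ?_ using 3
  · rw [hx, Nat.cast_sub (by omega : 1 ≤ b)]
    field_simp
    ring
  · rw [hx]
    exact div_le_of_le_mul₀ hn (by positivity) (by nlinarith [pi_pos])

theorem stmt_4_general (n b F d : ℕ) (hb : 3 ≤ b)
    (H : ℤ → ℝ) (hH0 : H 0 = 1)
    (hH : ∀ j : ℤ, j ≠ 0 → H j = (Real.sin (Real.pi * ((b : ℝ) - 1) * j / n) /
        (((b : ℝ) - 1) * Real.sin (Real.pi * j / n))) ^ F)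
    (j : Fin d → ℤ) (hjr : ∀ s, 2 * |(j s : ℝ)| ≤ n) :
    |∏ s, H (j s)| ≤
      (2 / (1 + ((b : ℝ) / n) * ((Finset.univ.sup fun s => (j s).natAbs : ℕ) : ℝ))) ^ F := by
  have habs_le_one (m : ℤ) : |H m| ≤ 1 := by
    rcases eq_or_ne m 0 with rfl | hm
    · simp [hH0]
    · rw [hH m hm, abs_pow]
      exact pow_le_one₀ (abs_nonneg _) (abs_dirichletRatio_le_one (by omega) _ _)
  have habs_le (m : ℤ) (hm : 2 * |(m : ℝ)| ≤ n) :
      |H m| ≤ (2 / (1 + b / n * |(m : ℝ)|)) ^ F := by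
    rcases eq_or_ne m 0 with rfl | hm0
    · simp [hH0, one_le_pow₀]
    · rw [hH m hm0, abs_pow]
      exact pow_le_pow_left₀ (abs_nonneg _) (abs_dirichletRatio_le_two_div (by omega) hm) F
  rcases isEmpty_or_nonempty (Fin d) with hd | hd
  · simp [one_le_pow₀]
  obtain ⟨t, -, ht⟩ := exists_mem_eq_sup univ univ_nonempty fun s => (j s).natAbs
  rw [ht, Nat.cast_natAbs, Int.cast_abs]
  exact (abs_prod_le_abs_of_abs_le_one (fun s => habs_le_one (j s)) t).trans (habs_le _ (hjr t))

theorem stmt_4 (n b F d : ℕ) (hn : ∃ k, n = 2 ^ k) (hb : 3 ≤ b) (hF : 1 ≤ F) (hd : 0 < d)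
    (H : ℤ → ℝ) (hH0 : H 0 = 1)
    (hH : ∀ j : ℤ, j ≠ 0 → H j = (Real.sin (Real.pi * ((b : ℝ) - 1) * j / n) /
        (((b : ℝ) - 1) * Real.sin (Real.pi * j / n))) ^ F)
    (j : Fin d → ℤ) (hjr : ∀ s, 2 * |(j s : ℝ)| ≤ n) :
    |∏ s, H (j s)| ≤
      (2 / (1 + ((b : ℝ) / n) * ((Finset.univ.sup fun s => (j s).natAbs : ℕ) : ℝ))) ^ F :=
  stmt_4_general n b F d hb H hH0 hH j hjr
end

section
/- Let x ∈ C^N, let π be a fixed permutation of [n]^d, and let G ∈ R^{[n]^d}. For uniformly random a ∈ [n]^d, define u_{π(i)} = Σ_{j∈[n]^d} G_{π(j)−π(i)} x_j ω^{a^T Σ j} (for a fixed invertible Σ). Then E_a[ |u_{π(i)} ω^{−a^T Σ i} − x_i G_0|² ] = Σ_{j ≠ i} |x_j G_{π(j)−π(i)}|², where ω = e^{2πi/n}. -/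
/-!
Write `χ_j a = ψ (a ⬝ᵥ A *ᵥ j)` for the standard character `ψ` of `ZMod n`. Multiplying by the
unimodular `ψ (a ⬝ᵥ A *ᵥ i)` shows that the quantity averaged is `|∑_{j ≠ i} c_j χ_j a|²` with
`c_j = G (π j - π i) * x j`. Since `det A` is odd and `n` is a power of two, `A` is invertible,
so the `χ_j` are pairwise orthogonal with `∑_a |χ_j a|² = n ^ d`, and Parseval gives the claim.
-/

open Finset Matrix ComplexConjugate

namespace AddChar

variable {ι κ R R' G 𝕜 : Type*}

lemma map_sum_eq_prod [AddCommMonoid G] [CommMonoid R'] (ψ : AddChar G R') (s : Finset ι)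
    (f : ι → G) : ψ (∑ i ∈ s, f i) = ∏ i ∈ s, ψ (f i) :=
  map_prod ψ.toMonoidHom (fun i => Multiplicative.ofAdd (f i)) s

lemma sum_apply_dotProduct [CommRing R] [Fintype R] [DecidableEq R] [CommRing R'] [IsDomain R']
    [Fintype κ] [DecidableEq κ] {ψ : AddChar R R'} (hψ : ψ.IsPrimitive) (v : κ → R) :
    ∑ a : κ → R, ψ (a ⬝ᵥ v) = if v = 0 then (Fintype.card R : R') ^ Fintype.card κ else 0 := by
  calc ∑ a : κ → R, ψ (a ⬝ᵥ v) = ∑ a : κ → R, ∏ s, ψ (a s * v s) := by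
        simp only [dotProduct, map_sum_eq_prod]
    _ = ∏ s, ∑ t, ψ (t * v s) := (Fintype.prod_sum fun s t => ψ (t * v s)).symm
    _ = ∏ s, if v s = 0 then (Fintype.card R : R') else 0 := by
        simp only [sum_mulShift _ hψ, Nat.cast_ite, Nat.cast_zero]
    _ = _ := by simp [prod_ite_zero, funext_iff]


lemma sum_apply_dotProduct_mul_conj [CommRing R] [Fintype R] [DecidableEq R] [RCLike 𝕜]
    [Fintype κ] [DecidableEq κ] [DecidableEq ι] {ψ : AddChar R 𝕜} (hψ : ψ.IsPrimitive)
    {f : ι → κ → R} (hf : Function.Injective f) (j l : ι) :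
    ∑ a : κ → R, ψ (a ⬝ᵥ f j) * conj (ψ (a ⬝ᵥ f l)) =
      if j = l then (Fintype.card R : 𝕜) ^ Fintype.card κ else 0 := by
  simp_rw [← map_neg_eq_conj, ← map_add_eq_mul, ← dotProduct_neg, ← dotProduct_add,
    ← sub_eq_add_neg, sum_apply_dotProduct hψ, sub_eq_zero, hf.eq_iff]

lemma norm_sum_mul_map_neg_sub [AddCommGroup G] [Finite G] [RCLike 𝕜] [DecidableEq ι]
    (ψ : AddChar G 𝕜) (c : ι → 𝕜) (t : ι → G) {s : Finset ι} {i : ι} (hi : i ∈ s) :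
    ‖(∑ j ∈ s, c j * ψ (t j)) * ψ (-t i) - c i‖ = ‖∑ j ∈ s.erase i, c j * ψ (t j)‖ := by
  calc ‖(∑ j ∈ s, c j * ψ (t j)) * ψ (-t i) - c i‖
      = ‖((∑ j ∈ s, c j * ψ (t j)) * ψ (-t i) - c i) * ψ (t i)‖ := by
        rw [norm_mul, ψ.norm_apply, mul_one]
    _ = ‖∑ j ∈ s, c j * ψ (t j) - c i * ψ (t i)‖ := by
        rw [sub_mul, mul_assoc, ← map_add_eq_mul, neg_add_cancel, map_zero_eq_one, mul_one]
    _ = _ := by rw [← add_sum_erase s _ hi, add_sub_cancel_left]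

end AddChar

lemma RCLike.sum_norm_sq_sum_eq_of_orthogonal {α ι 𝕜 : Type*} [Fintype α] [DecidableEq ι]
    [RCLike 𝕜]     {χ : ι → α → 𝕜} {M : ℝ} {s : Finset ι}
    (hχ : ∀ j ∈ s, ∀ l ∈ s, ∑ a, χ j a * conj (χ l a) = if j = l then (M : 𝕜) else 0)
    (c : ι → 𝕜) :
    ∑ a, ‖∑ j ∈ s, c j * χ j a‖ ^ 2 = M * ∑ j ∈ s, ‖c j‖ ^ 2 := by
  apply RCLike.ofReal_injective (K := 𝕜)
  push_cast
  calc ∑ a, ((‖∑ j ∈ s, c j * χ j a‖ : 𝕜)) ^ 2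
      = ∑ j ∈ s, ∑ l ∈ s, c j * conj (c l) * ∑ a, χ j a * conj (χ l a) := by
        simp_rw [← RCLike.mul_conj, map_sum, map_mul, sum_mul_sum, mul_sum]
        rw [sum_comm]
        refine sum_congr rfl fun j _ => ?_
        rw [sum_comm]
        refine sum_congr rfl fun l _ => sum_congr rfl fun a _ => by ring
    _ = M * ∑ j ∈ s, (‖c j‖ : 𝕜) ^ 2 := by
        rw [mul_sum]
        refine sum_congr rfl fun j hj => ?_
        rw [sum_congr rfl fun l hl => by rw [hχ j hj l hl], ← RCLike.mul_conj]
        simp_rw [mul_ite, mul_zero, sum_ite_eq, if_pos hj]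
        ring

lemma ZMod.isUnit_of_odd_val {k : ℕ} {a : ZMod (2 ^ k)} (ha : Odd a.val) : IsUnit a := by
  have : NeZero (2 ^ k) := ⟨pow_ne_zero k two_ne_zero⟩
  rw [← ZMod.natCast_zmod_val a, ZMod.isUnit_iff_coprime]
  exact ha.coprime_two_right.pow_right k

theorem stmt_11 (n d : ℕ) [NeZero n] (hn : ∃ k, n = 2 ^ k)
    (x : (Fin d → ZMod n) → ℂ) (G : (Fin d → ZMod n) → ℝ)
    (π : Equiv.Perm (Fin d → ZMod n))
    (A : Matrix (Fin d) (Fin d) (ZMod n)) (hA : Odd A.det.val)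
    (i : Fin d → ZMod n)
    (ch : ZMod n → ℂ)
    (hch : ∀ t : ZMod n, ch t = Complex.exp (2 * Real.pi * Complex.I * (t.val : ℂ) / (n : ℂ))) :
    ((n : ℝ) ^ d)⁻¹ * ∑ a : Fin d → ZMod n,
        ‖(∑ j : Fin d → ZMod n,
            (G (π j - π i) : ℂ) * x j * ch (∑ s, a s * (A.mulVec j) s)) *
          ch (-(∑ s, a s * (A.mulVec i) s)) - x i * (G 0 : ℂ)‖ ^ 2
      = ∑ j ∈ Finset.univ \ {i}, ‖x j‖ ^ 2 * (G (π j - π i)) ^ 2 := by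
  classical
  obtain rfl : ch = ZMod.stdAddChar :=
    funext fun t => by rw [hch, ZMod.stdAddChar_apply, ZMod.toCircle_apply]
  have hinj : Function.Injective A.mulVec := by
    obtain ⟨k, rfl⟩ := hn
    exact mulVec_injective_of_isUnit ((isUnit_iff_isUnit_det A).2 (ZMod.isUnit_of_odd_val hA))
  set c : (Fin d → ZMod n) → ℂ := fun j => G (π j - π i) * x j
  have hterm (a : Fin d → ZMod n) : ‖(∑ j, c j * ZMod.stdAddChar (a ⬝ᵥ A *ᵥ j)) *
      ZMod.stdAddChar (-(a ⬝ᵥ A *ᵥ i)) - x i * G 0‖ =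
        ‖∑ j ∈ univ.erase i, c j * ZMod.stdAddChar (a ⬝ᵥ A *ᵥ j)‖ := by
    rw [show x i * G 0 = c i by simp [c, mul_comm]]
    exact AddChar.norm_sum_mul_map_neg_sub _ c (fun j => a ⬝ᵥ A *ᵥ j) (mem_univ i)
  have horth (j l : Fin d → ZMod n) := AddChar.sum_apply_dotProduct_mul_conj
    (ZMod.isPrimitive_stdAddChar n) hinj j l
  simp only [ZMod.card, Fintype.card_fin] at horth
  calc _ = ((n : ℝ) ^ d)⁻¹ * ∑ a : Fin d → ZMod n,
        ‖∑ j ∈ univ.erase i, c j * ZMod.stdAddChar (a ⬝ᵥ A *ᵥ j)‖ ^ 2 :=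
        congrArg _ (sum_congr rfl fun a _ => congrArg (· ^ 2) (hterm a))
    _ = ∑ j ∈ univ.erase i, ‖c j‖ ^ 2 := by
      rw [RCLike.sum_norm_sq_sum_eq_of_orthogonal (M := n ^ d)
        (fun j _ l _ => by push_cast; exact horth j l),
        inv_mul_cancel_left₀ (pow_ne_zero d (NeZero.ne (n : ℝ)))]
    _ = _ := by simp [c, sdiff_singleton_eq_erase, mul_pow, mul_comm]
end

section
/- Let x, χ ∈ C^N and k ≤ N. If ||x − χ||_∞ ≤ δ and |x_i − χ_i| ≤ |x_i| for all i, then ||x − χ||₂² ≤ k·δ² + err_k(x)², where err_k(x) is the ℓ₂ norm of x outside its top k coordinates. -/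
open Finset

theorem sum_norm_sub_sq_le_card_mul_add_sum_compl {ι E : Type*} [Fintype ι] [DecidableEq ι]
    [SeminormedAddGroup E] (x y : ι → E) (T : Finset ι) {δ : ℝ}
    (hinf : ∀ i, ‖x i - y i‖ ≤ δ) (hdom : ∀ i, ‖x i - y i‖ ≤ ‖x i‖) :
    ∑ i, ‖x i - y i‖ ^ 2 ≤ #T * δ ^ 2 + ∑ i ∈ Tᶜ, ‖x i‖ ^ 2 := by
  rw [← sum_add_sum_compl T]
  gcongr ?_ + ∑ i ∈ Tᶜ, ?_ ^ 2 with i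
  · calc ∑ i ∈ T, ‖x i - y i‖ ^ 2 ≤ ∑ _i ∈ T, δ ^ 2 := by gcongr with i; exact hinf i
      _ = #T * δ ^ 2 := by rw [sum_const, nsmul_eq_mul]
  · exact hdom i

theorem stmt_16_general {ι : Type} [Fintype ι] [DecidableEq ι] (x χ : ι → ℂ) (k : ℕ)
    (δ : ℝ)
    (T : Finset ι) (hT : T.card = k)
    (hinf : ∀ i, ‖x i - χ i‖ ≤ δ)
    (hdom : ∀ i, ‖x i - χ i‖ ≤ ‖x i‖) :
    ∑ i, ‖x i - χ i‖ ^ 2 ≤ (k : ℝ) * δ ^ 2 + ∑ i ∈ Tᶜ, ‖x i‖ ^ 2 :=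
  hT ▸ sum_norm_sub_sq_le_card_mul_add_sum_compl x χ T hinf hdom

theorem stmt_16 {ι : Type} [Fintype ι] [DecidableEq ι] (x χ : ι → ℂ) (k : ℕ)
    (hk : k ≤ Fintype.card ι) (δ : ℝ)
    (T : Finset ι) (hT : T.card = k)
    (htop : ∀ i ∈ T, ∀ j ∉ T, ‖x j‖ ≤ ‖x i‖)
    (hinf : ∀ i, ‖x i - χ i‖ ≤ δ)
    (hdom : ∀ i, ‖x i - χ i‖ ≤ ‖x i‖) :
    ∑ i, ‖x i - χ i‖ ^ 2 ≤ (k : ℝ) * δ ^ 2 + ∑ i ∈ Tᶜ, ‖x i‖ ^ 2 :=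
  stmt_16_general x χ k δ T hT hinf hdom
end
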